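/- Let q = (2e+1)·t with integers e ≥ 0 and t ≥ 2, and let d be a positive divisor of t. There exists an additive subgroup C of Z_q^2 that is a perfect e-code and is isomorphic as an additive group to ZMod(t/d) × ZMod(t·d) if and only if d divides gcd(2e+1, t). -/

import Mathlib

/-!
A subgroup of `(ZMod q)²` is killed by `q`, so `ZMod (t / d) × ZMod (t * d)` can only occur when
`t * d ∣ (2e + 1) * t`, i.e. `d ∣ 2e + 1`.

Conversely, let `s = 2e + 1 = d * k` and `t = d * m`, so `q = s * n` with `n = d * m`, and
`s ∣ n * k`. Take the code spanned by `(s, k)` and `(0, s)`, whose codewords are `(i s, i k + j s)`.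
Given `x`, the first coordinate `i s` must be the multiple of `s` within `e` of `x₀`; this fixes `i`
modulo `n`, hence `i k` modulo `s` (as `s ∣ n k`), and then the second coordinate is the unique
element of `i k + s ℤ` within `e` of `x₁`. The code is the direct sum of the cyclic groups generated
by `(d s, 0) = d (s, k) - (0, s)` and `(s, k)`, of orders `m` and `d m d`.
-/

def leeDist {q : ℕ} (x y : ZMod q) : ℕ := min (x - y).val (q - (x - y).val)

def maxDist {q n : ℕ} (x y : Fin n → ZMod q) : ℕ :=
  Finset.univ.sup fun i => leeDist (x i) (y i)

def IsPerfectCode {q n : ℕ} (e : ℕ) (C : Set (Fin n → ZMod q)) : Prop :=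
  ∀ x : Fin n → ZMod q, ∃! c, c ∈ C ∧ maxDist x c ≤ e

theorem leeDist_eq_natAbs_valMinAbs {q : ℕ} [NeZero q] (x y : ZMod q) :
    leeDist x y = (x - y).valMinAbs.natAbs :=
  (ZMod.valMinAbs_natAbs_eq_min _).symm

theorem leeDist_le_iff {q e : ℕ} [NeZero q] (he : 2 * e < q) (x y : ZMod q) :
    leeDist x y ≤ e ↔ ∃ w : ℤ, |w| ≤ e ∧ x - y = w := by
  rw [leeDist_eq_natAbs_valMinAbs]
  constructor
  · intro h
    refine ⟨_, ?_, (ZMod.coe_valMinAbs _).symm⟩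
    rw [abs_le]; omega
  · rintro ⟨w, hw, hxy⟩
    rw [abs_le] at hw
    rw [(ZMod.valMinAbs_spec _ w).mpr ⟨hxy, by constructor <;> omega⟩]
    omega

theorem maxDist_le_iff {q n e : ℕ} (x y : Fin n → ZMod q) :
    maxDist x y ≤ e ↔ ∀ i, leeDist (x i) (y i) ≤ e :=
  Finset.sup_le_iff.trans (by simp)

theorem exists_leeDist_intCast_add_mul_le {q e : ℕ} [NeZero q] (he : 2 * e < q)
    (x : ZMod q) (b : ℤ) : ∃ i : ℤ, leeDist x ((b + i * (2 * e + 1) : ℤ) : ZMod q) ≤ e := by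
  obtain ⟨X, hX⟩ := ZMod.intCast_surjective (x - (b : ZMod q))
  have hs : (0 : ℤ) < 2 * e + 1 := by positivity
  refine ⟨(X + e) / (2 * e + 1), (leeDist_le_iff he _ _).mpr
    ⟨(X + e) % (2 * e + 1) - e, ?_, ?_⟩⟩
  · have := Int.emod_nonneg (X + e) hs.ne'
    have := Int.emod_lt_of_pos (X + e) hs
    rw [abs_le]; constructor <;> omega
  · rw [eq_add_of_sub_eq hX.symm, Int.emod_def]
    push_cast; ring

theorem intCast_eq_of_leeDist_le {q e : ℕ} [NeZero q] (hq : 2 * e + 1 ∣ q) {x : ZMod q}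
    {Y Y' : ℤ} (hY : leeDist x Y ≤ e) (hY' : leeDist x Y' ≤ e)
    (hs : (2 * e + 1 : ℤ) ∣ Y - Y') : (Y : ZMod q) = Y' := by
  have he : 2 * e < q := Nat.le_of_dvd (NeZero.pos q) hq
  obtain ⟨w, hw, hxw⟩ := (leeDist_le_iff he _ _).mp hY
  obtain ⟨w', hw', hxw'⟩ := (leeDist_le_iff he _ _).mp hY'
  have hq' : (q : ℤ) ∣ (Y - Y') - (w' - w) := by
    rw [← ZMod.intCast_zmod_eq_zero_iff_dvd]
    push_cast
    linear_combination hxw' - hxw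
  have hww : w' - w = 0 := by
    refine Int.eq_zero_of_abs_lt_dvd (m := 2 * e + 1) ?_ ?_
    · exact (dvd_sub_right hs).mp ((Int.natCast_dvd_natCast.mpr hq).trans (by exact_mod_cast hq'))
    · rw [abs_le] at hw hw'
      rw [abs_lt]
      constructor <;> omega
  rw [sub_eq_zero.mp hww] at hxw'
  exact sub_right_injective (hxw.trans hxw'.symm)

def triangularCode (q s : ℕ) (k : ℤ) : AddSubgroup (Fin 2 → ZMod q) :=
  AddSubgroup.closure {![(s : ZMod q), (k : ZMod q)], ![0, (s : ZMod q)]}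

theorem mem_triangularCode_iff {q s : ℕ} {k : ℤ} {c : Fin 2 → ZMod q} :
    c ∈ triangularCode q s k ↔
      ∃ i j : ℤ, ![((i * s : ℤ) : ZMod q), ((i * k + j * s : ℤ) : ZMod q)] = c := by
  rw [triangularCode, AddSubgroup.mem_closure_pair]
  simp only [Matrix.smul_cons, Matrix.smul_empty, zsmul_eq_mul, Matrix.cons_add_cons,
    Matrix.empty_add_empty, mul_zero, add_zero]
  push_cast
  rfl

theorem isPerfectCode_triangularCode (e n : ℕ) [NeZero n] (k : ℤ)
    (hk : (2 * e + 1 : ℤ) ∣ n * k) :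
    IsPerfectCode e
      (triangularCode ((2 * e + 1) * n) (2 * e + 1) k : Set (Fin 2 → ZMod ((2 * e + 1) * n))) := by
  have he : 2 * e < (2 * e + 1) * n := by
    nlinarith [Nat.one_le_iff_ne_zero.mpr (NeZero.ne n)]
  intro x
  simp only [SetLike.mem_coe, mem_triangularCode_iff, maxDist_le_iff, Fin.forall_fin_two]
  obtain ⟨i, hi⟩ := exists_leeDist_intCast_add_mul_le he (x 0) 0
  obtain ⟨j, hj⟩ := exists_leeDist_intCast_add_mul_le he (x 1) (i * k)
  refine ⟨_, ⟨⟨i, j, rfl⟩, ?_⟩, ?_⟩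
  · rw [zero_add] at hi
    exact ⟨by simpa using hi, by simpa using hj⟩
  · rintro _ ⟨⟨i', j', rfl⟩, hc0, hc1⟩
    have hs : 2 * e + 1 ∣ (2 * e + 1) * n := dvd_mul_right _ _
    have h0 : ((i * (2 * e + 1) : ℤ) : ZMod ((2 * e + 1) * n)) = (i' * (2 * e + 1) : ℤ) :=
      intCast_eq_of_leeDist_le hs (by simpa using hi) (by simpa using hc0)
        (dvd_sub (dvd_mul_left _ _) (dvd_mul_left _ _))
    have hn : (n : ℤ) ∣ i' - i := by
      rw [ZMod.intCast_eq_intCast_iff_dvd_sub] at h0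
      push_cast at h0
      refine (mul_dvd_mul_iff_left (by positivity : (2 * e + 1 : ℤ) ≠ 0)).mp ?_
      rwa [show (2 * e + 1 : ℤ) * (i' - i) = i' * (2 * e + 1) - i * (2 * e + 1) by ring]
    have h1 : ((i * k + j * (2 * e + 1) : ℤ) : ZMod ((2 * e + 1) * n)) =
        (i' * k + j' * (2 * e + 1) : ℤ) := by
      refine intCast_eq_of_leeDist_le hs (by simpa using hj) (by simpa using hc1) ?_
      rw [show i * k + j * (2 * e + 1) - (i' * k + j' * (2 * e + 1)) =
        -((i' - i) * k) + (j - j') * (2 * e + 1) by ring]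
      exact (hk.trans (mul_dvd_mul_right hn k)).neg_right.add (dvd_mul_left _ _)
    push_cast at h0 h1 ⊢
    rw [← h0, ← h1]

theorem closure_pair_eq_closure_zsmul_sub_pair {G : Type*} [AddCommGroup G] (a b : G) (n : ℤ) :
    AddSubgroup.closure {a, b} = AddSubgroup.closure {n • a - b, a} := by
  ext c
  rw [AddSubgroup.mem_closure_pair, AddSubgroup.mem_closure_pair]
  constructor
  · rintro ⟨i, j, rfl⟩
    exact ⟨-j, i + n * j, by module⟩
  · rintro ⟨i, j, rfl⟩
    exact ⟨n * i + j, -i, by module⟩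

theorem nonempty_closure_pair_addEquiv {G : Type*} [AddCommGroup G] {u v : G} {m N : ℕ}
    (hu : (m : ℤ) • u = 0) (hv : (N : ℤ) • v = 0)
    (hindep : ∀ A B : ℤ, A • u + B • v = 0 → (A : ZMod m) = 0 ∧ (B : ZMod N) = 0) :
    Nonempty (AddSubgroup.closure {u, v} ≃+ ZMod m × ZMod N) := by
  set g := (ZMod.lift m ⟨zmultiplesHom G u, hu⟩).coprod (ZMod.lift N ⟨zmultiplesHom G v, hv⟩)
  have hg : ∀ A B : ℤ, g (A, B) = A • u + B • v := by
    intro A B; simp [g, ZMod.lift_coe]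
  have hrange : g.range = AddSubgroup.closure {u, v} := by
    ext c
    rw [AddSubgroup.mem_closure_pair, AddMonoidHom.mem_range]
    constructor
    · rintro ⟨⟨a, b⟩, rfl⟩
      obtain ⟨A, rfl⟩ := ZMod.intCast_surjective a
      obtain ⟨B, rfl⟩ := ZMod.intCast_surjective b
      exact ⟨A, B, (hg A B).symm⟩
    · rintro ⟨A, B, rfl⟩
      exact ⟨(A, B), hg A B⟩
  have hinj : Function.Injective g := by
    rw [injective_iff_map_eq_zero]
    rintro ⟨a, b⟩ h
    obtain ⟨A, rfl⟩ := ZMod.intCast_surjective a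
    obtain ⟨B, rfl⟩ := ZMod.intCast_surjective b
    obtain ⟨hA, hB⟩ := hindep A B (hg A B ▸ h)
    rw [hA, hB]
    rfl
  exact ⟨(AddEquiv.addSubgroupCongr hrange.symm).trans (AddMonoidHom.ofInjective hinj).symm⟩

theorem nonempty_triangularCode_addEquiv (s d m k : ℕ) (hs : s = d * k) (hd : d ≠ 0)
    (hk : k ≠ 0) :
    Nonempty (triangularCode (s * (d * m)) s k ≃+ ZMod m × ZMod (d * m * d)) := by
  subst hs
  set q := d * k * (d * m)
  set a : Fin 2 → ZMod q := ![((d * k : ℕ) : ZMod q), ((k : ℤ) : ZMod q)]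
  set b : Fin 2 → ZMod q := ![0, ((d * k : ℕ) : ZMod q)]
  set u := (d : ℤ) • a - b
  have hcomb : ∀ A B : ℤ,
      A • u + B • a = ![(((d * A + B) * (d * k) : ℤ) : ZMod q), ((B * k : ℤ) : ZMod q)] := by
    intro A B
    ext r
    fin_cases r <;>
    · simp only [u, a, b, Pi.add_apply, Pi.sub_apply, Pi.smul_apply]
      simp only [zsmul_eq_mul]
      push_cast
      ring
  have hzero : ∀ A B : ℤ,
      A • u + B • a = 0 ↔ (q : ℤ) ∣ (d * A + B) * (d * k) ∧ (q : ℤ) ∣ B * k := by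
    intro A B
    rw [hcomb]
    simp only [Matrix.cons_eq_zero_iff, Matrix.zero_empty, and_true,
      ZMod.intCast_zmod_eq_zero_iff_dvd]
  have hq : (q : ℤ) = m * d * (d * k) := by push_cast [q]; ring
  have hu : (m : ℤ) • u = 0 := by
    simpa using (hzero m 0).mpr ⟨⟨1, by rw [hq]; ring⟩, ⟨0, by ring⟩⟩
  have hv : ((d * m * d : ℕ) : ℤ) • a = 0 := by
    simpa using (hzero 0 (d * m * d)).mpr ⟨⟨d, by rw [hq]; ring⟩, ⟨1, by rw [hq]; ring⟩⟩
  rw [triangularCode, closure_pair_eq_closure_zsmul_sub_pair a b d]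
  refine nonempty_closure_pair_addEquiv hu hv fun A B h => ?_
  obtain ⟨hA, hB⟩ := (hzero A B).mp h
  simp only [ZMod.intCast_zmod_eq_zero_iff_dvd]
  have hdk : (d * k : ℤ) ≠ 0 := by positivity
  obtain ⟨z, rfl⟩ : ((d * m * d : ℕ) : ℤ) ∣ B := by
    refine (mul_dvd_mul_iff_right (by positivity : (k : ℤ) ≠ 0)).mp ?_
    rwa [hq, show (m * d * (d * k) : ℤ) = d * m * d * k by ring] at hB
  refine ⟨(mul_dvd_mul_iff_left (by positivity : (d : ℤ) ≠ 0)).mp ?_, dvd_mul_right _ _⟩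
  rw [hq, mul_dvd_mul_iff_right hdk] at hA
  push_cast at hA
  rw [mul_comm]
  exact (dvd_add_left ⟨d * z, by ring⟩).mp hA

theorem dvd_of_forall_nsmul_eq_zero_of_addEquiv {G : Type*} [AddGroup G] {q a b : ℕ}
    (hG : ∀ x : G, q • x = 0) (φ : G ≃+ ZMod a × ZMod b) : b ∣ q := by
  have h := congrArg (fun x => (φ x).2) (hG (φ.symm (0, 1)))
  simpa [ZMod.natCast_eq_zero_iff] using h

theorem stmt7_general (e t q d : ℕ) (ht : 2 ≤ t) (hq : q = (2 * e + 1) * t)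
    (hdt : d ∣ t) :
    (∃ C : AddSubgroup (Fin 2 → ZMod q),
        IsPerfectCode e (C : Set (Fin 2 → ZMod q)) ∧
        Nonempty (C ≃+ (ZMod (t / d) × ZMod (t * d)))) ↔
    d ∣ Nat.gcd (2 * e + 1) t := by
  subst hq
  constructor
  · rintro ⟨C, -, ⟨φ⟩⟩
    have hC : ∀ c : C, ((2 * e + 1) * t) • c = 0 := fun c =>
      Subtype.ext (funext fun i => by simp [nsmul_eq_mul])
    have htd := dvd_of_forall_nsmul_eq_zero_of_addEquiv hC φ
    rw [mul_comm _ t] at htd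
    exact Nat.dvd_gcd (Nat.dvd_of_mul_dvd_mul_left (by omega) htd) hdt
  · intro hgcd
    obtain ⟨k, hk⟩ := hgcd.trans (Nat.gcd_dvd_left _ _)
    obtain ⟨m, rfl⟩ := hdt
    have hd : d ≠ 0 := by rintro rfl; omega
    have : NeZero (d * m) := ⟨by omega⟩
    refine ⟨_, isPerfectCode_triangularCode e (d * m) k ⟨m, ?_⟩, ?_⟩
    · exact_mod_cast (by rw [hk]; ring : d * m * k = (2 * e + 1) * m)
    · rw [Nat.mul_div_cancel_left m (Nat.pos_of_ne_zero hd)]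
      exact nonempty_triangularCode_addEquiv _ d m k hk hd (by rintro rfl; omega)

/-- Admissible group structures of two-dimensional linear perfect codes:
`ZMod (t/d) × ZMod (t·d)` is realizable iff `d ∣ gcd(2e+1, t)`. -/
theorem stmt7 (e t q d : ℕ) (ht : 2 ≤ t) (hq : q = (2 * e + 1) * t)
    (hd : 0 < d) (hdt : d ∣ t) :
    (∃ C : AddSubgroup (Fin 2 → ZMod q),
        IsPerfectCode e (C : Set (Fin 2 → ZMod q)) ∧
        Nonempty (C ≃+ (ZMod (t / d) × ZMod (t * d)))) ↔
    d ∣ Nat.gcd (2 * e + 1) t :=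
  stmt7_general e t q d ht hq hdt
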